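/- Let f be a nonzero homogeneous polynomial of degree d in variables x_1,...,x_N over an algebraically closed field, defining a hypersurface Y = V(f) in ℙ^{N-1}, and embed ℙ^{N-1} ⊂ ℙ^N as the hyperplane {x_0 = 0}. If there exists a smooth degree-d hypersurface X in ℙ^N with Y = X ∩ ℙ^{N-1}, then Y has only isolated singularities. -/

import Mathlib

/-!
Put `h(x) = ∂g/∂x₀ (0, x)`; restricting to `x₀ = 0` (that is, `aeval (Fin.cases 0 X)`) commutes
with `∂/∂xᵢ` for `i ≥ 1`, so smoothness of `g` says that `h`, of degree `e = d - 1`, has no zero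
on the cone `C` of common zeros of the `∂f/∂xᵢ` other than `0`. For `d = 1` the `∂f/∂xᵢ` are
constants, not all zero by Euler's formula `∑ xᵢ ∂f/∂xᵢ = f ≠ 0`, so `ℙ(C)` is empty.

For `e ≥ 1`, the Nullstellensatz puts every `xᵢ^M` into `(∂f/∂xⱼ) + (h)`, and since `(∂f/∂xⱼ)` is
homogeneous we get `xᵢ^(M+e) = vᵢ h + (element of (∂f/∂xⱼ))` with `vᵢ` homogeneous of degree `M`.
Each point of `ℙ(C)` has a representative with `h = 1`, unique up to an `e`-th root of unity, and
these satisfy `xᵢ^(M+e) = vᵢ(x)`. The polynomials `xᵢ^(M+e) - vᵢ` generate an ideal of finite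
codimension (they are a Gröbner basis for `degLex`), so this system has finitely many solutions.
-/

open MvPolynomial MonomialOrder

open scoped MonomialOrder

namespace MvPolynomial

section Homogeneous

variable {R σ : Type*} [CommSemiring R]

theorem IsHomogeneous.eval_smul {p : MvPolynomial σ R} {n : ℕ} (hp : p.IsHomogeneous n)
    (c : R) (x : σ → R) : eval (c • x) p = c ^ n * eval x p := by
  rw [eval_eq, eval_eq, Finset.mul_sum]
  refine Finset.sum_congr rfl fun d hd => ?_
  have hdeg : ∑ i ∈ d.support, d i = n := by
    rw [← Finsupp.degree_apply, Finsupp.degree_eq_weight_one]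
    exact hp (mem_support_iff.mp hd)
  simp only [Pi.smul_apply, smul_eq_mul, mul_pow, Finset.prod_mul_distrib,
    Finset.prod_pow_eq_pow_sum, hdeg]
  ring

attribute [local instance] gradedAlgebra in
theorem homogeneousComponent_add_mul_of_isHomogeneous {h : MvPolynomial σ R} {e : ℕ}
    (hh : h.IsHomogeneous e) (p : MvPolynomial σ R) (m : ℕ) :
    homogeneousComponent (m + e) (p * h) = homogeneousComponent m p * h := by
  have := DirectSum.coe_decompose_mul_of_right_mem_of_le (homogeneousSubmodule σ R) (a := p)
    (mem_homogeneousSubmodule e h |>.2 hh) (Nat.le_add_left e m)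
  rw [Nat.add_sub_cancel] at this
  rw [← decomposition.decompose'_apply, ← decomposition.decompose'_apply]
  exact this

theorem eq_zero_of_isHomogeneous_one_of_eval_pderiv_eq_zero [Fintype σ]
    {f : MvPolynomial σ R} (hf : f.IsHomogeneous 1) {x : σ → R}
    (hx : ∀ i, eval x (pderiv i f) = 0) : f = 0 := by
  have hpderiv : ∀ i, pderiv i f = 0 := fun i => by
    have h0 : (pderiv i f).totalDegree = 0 :=
      (totalDegree_zero_iff_isHomogeneous σ).2 hf.pderiv
    have hxi := hx i
    rw [totalDegree_eq_zero_iff_eq_C.1 h0, eval_C] at hxi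
    rw [totalDegree_eq_zero_iff_eq_C.1 h0, hxi, C_0]
  simpa [hpderiv] using hf.sum_X_mul_pderiv.symm

end Homogeneous

section Restriction

variable {R : Type*} [CommSemiring R] {N : ℕ}

theorem IsHomogeneous.aeval_finCases_zero_X {q : MvPolynomial (Fin (N + 1)) R} {n : ℕ}
    (hq : q.IsHomogeneous n) :
    (MvPolynomial.aeval (Fin.cases 0 X : Fin (N + 1) → MvPolynomial (Fin N) R) q).IsHomogeneous
      n := by
  rw [← one_mul n]
  exact hq.aeval _ fun i => by
    cases i using Fin.cases
    exacts [isHomogeneous_zero _ _ 1, isHomogeneous_X _ _]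

theorem eval_aeval_finCases_zero_X (q : MvPolynomial (Fin (N + 1)) R) (x : Fin N → R) :
    eval x (aeval (Fin.cases 0 X : Fin (N + 1) → MvPolynomial (Fin N) R) q)
      = eval (Fin.cases 0 x) q := by
  induction q using MvPolynomial.induction_on with
  | C a => simp
  | add p q hp hq => simp only [map_add, hp, hq]
  | mul_X p j hp =>
    simp only [map_mul, aeval_X, eval_X, hp]
    cases j using Fin.cases <;> simp

theorem pderiv_aeval_finCases_zero_X (q : MvPolynomial (Fin (N + 1)) R) (i : Fin N) :
    pderiv i (aeval (Fin.cases 0 X : Fin (N + 1) → MvPolynomial (Fin N) R) q)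
      = aeval (Fin.cases 0 X) (pderiv i.succ q) := by
  classical
  induction q using MvPolynomial.induction_on with
  | C a => simp
  | add p q hp hq => simp only [map_add, hp, hq]
  | mul_X p j hp =>
    simp only [map_mul, aeval_X, Derivation.leibniz, hp, pderiv_X, smul_eq_mul, map_add]
    cases j using Fin.cases <;> simp [Pi.single_apply, Fin.succ_inj]

theorem eval_aeval_finCases_zero_X_pderiv_zero_ne_zero {g : MvPolynomial (Fin (N + 1)) R}
    (hsmooth : ∀ x : Fin (N + 1) → R, x ≠ 0 → (∀ i, eval x (pderiv i g) = 0) → False)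
    {x : Fin N → R} (hx : x ≠ 0)
    (hsing : ∀ i, eval x (pderiv i (aeval (Fin.cases 0 X) g)) = 0) :
    eval x (aeval (Fin.cases 0 X) (pderiv 0 g)) ≠ 0 := by
  intro h0
  have hx' : (Fin.cases 0 x : Fin (N + 1) → R) ≠ 0 := fun hzero =>
    hx <| by ext j; simpa using congrFun hzero j.succ
  refine hsmooth _ hx' fun i => ?_
  cases i using Fin.cases with
  | zero => rwa [← eval_aeval_finCases_zero_X]
  | succ i => rw [← eval_aeval_finCases_zero_X, ← pderiv_aeval_finCases_zero_X, hsing]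

end Restriction

section HomogeneousIdeal

variable {R σ : Type*} [CommRing R]

attribute [local instance] gradedAlgebra in
theorem exists_isHomogeneous_sub_mul_mem {I : Ideal (MvPolynomial σ R)}
    (hI : I.IsHomogeneous (homogeneousSubmodule σ R)) {h q : MvPolynomial σ R} {e m : ℕ}
    (hh : h.IsHomogeneous e) (hq : q.IsHomogeneous (m + e)) (hmem : q ∈ I ⊔ Ideal.span {h}) :
    ∃ v : MvPolynomial σ R, v.IsHomogeneous m ∧ q - v * h ∈ I := by
  obtain ⟨y, hy, z, hz, rfl⟩ := Submodule.mem_sup.1 hmem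
  obtain ⟨B, rfl⟩ := Ideal.mem_span_singleton'.1 hz
  refine ⟨homogeneousComponent m B, homogeneousComponent_isHomogeneous m B, ?_⟩
  rw [← homogeneousComponent_eq_self hq, map_add,
    homogeneousComponent_add_mul_of_isHomogeneous hh, add_sub_cancel_right]
  exact homogeneousComponent_mem_of_mem hI hy _

end HomogeneousIdeal

section Reduction

variable {R σ : Type*} [CommRing R] [Nontrivial R] [Finite σ]

theorem finite_quotient_span_X_pow_sub {m : ℕ} (v : σ → MvPolynomial σ R)
    (hv : ∀ i, (v i).totalDegree < m) :
    Module.Finite R (MvPolynomial σ R ⧸ Ideal.span (Set.range fun i => X i ^ m - v i)) := by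
  classical
  have := Fintype.ofFinite σ
  let _ : LinearOrder σ := LinearOrder.lift' _ (Fintype.equivFin σ).injective
  set J := Ideal.span (Set.range fun i => X i ^ m - v i)
  have hlt : ∀ i, degLex.degree (v i) ≺[degLex] degLex.degree (X i ^ m : MvPolynomial σ R) :=
    fun i => lt_of_not_ge fun hle => by
      have := degLex_totalDegree_monotone hle
      rw [totalDegree_X_pow] at this
      exact (hv i).not_ge this
  have hdeg : ∀ i, degLex.degree (X i ^ m - v i) = Finsupp.single i m := fun i => by
    rw [degree_sub_of_lt (hlt i), X_pow_eq_monomial, degree_monomial, if_neg one_ne_zero]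
  have hunit : ∀ i, IsUnit (degLex.leadingCoeff (X i ^ m - v i)) := fun i => by
    rw [leadingCoeff_sub_of_lt (hlt i), X_pow_eq_monomial, monic_monomial_one.leadingCoeff_eq_one]
    exact isUnit_one
  refine Module.Finite.of_surjective
    ((Ideal.Quotient.mkₐ R J).toLinearMap ∘ₗ (restrictDegree σ R (m - 1)).subtype) ?_
  intro a
  obtain ⟨f, rfl⟩ := Ideal.Quotient.mk_surjective a
  -- The leading monomial of `X i ^ m - v i` is `X i ^ m`, so division leaves a remainder of
  -- degree `< m` in each variable.
  obtain ⟨g, r, hfr, -, hr⟩ := degLex.div hunit f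
  refine ⟨⟨r, (mem_restrictDegree _ _ _).2 fun c hc i => ?_⟩, ?_⟩
  · have := hr c hc i
    rw [hdeg, Finsupp.single_le_iff] at this
    omega
  · refine Ideal.Quotient.eq.2 ?_
    have hcomb : Finsupp.linearCombination _ (fun i => X i ^ m - v i) g ∈ J :=
      (Finsupp.range_linearCombination (R := MvPolynomial σ R) (v := fun i => X i ^ m - v i)).le
        (LinearMap.mem_range_self _ g)
    simpa [hfr] using hcomb

end Reduction

section Finiteness

variable {k σ : Type*} [Field k] [Finite σ]

theorem finite_zeroLocus_of_finite_quotient (I : Ideal (MvPolynomial σ k))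
    [Module.Finite k (MvPolynomial σ k ⧸ I)] : (zeroLocus k I).Finite := by
  have hannihilator : ∀ i, ∃ q : Polynomial k, q ≠ 0 ∧ Polynomial.aeval (X i) q ∈ I := by
    intro i
    obtain ⟨q, hq, hq0⟩ := IsIntegral.of_finite k (Ideal.Quotient.mk I (X i))
    refine ⟨q, hq.ne_zero, ?_⟩
    rw [← Ideal.Quotient.eq_zero_iff_mem, ← Ideal.Quotient.mkₐ_eq_mk k,
      ← Polynomial.aeval_algHom_apply]
    exact hq0
  choose q hq0 hqI using hannihilator
  refine (Set.Finite.pi fun i => Polynomial.finite_setOfPred_isRoot (hq0 i)).subset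
    fun y hy i _ => ?_
  have := (mem_zeroLocus_iff.1 hy) _ (hqI i)
  rwa [← Polynomial.aeval_algHom_apply, aeval_X] at this

theorem exists_X_pow_mem_of_zeroLocus_subset_zero [IsAlgClosed k] {J : Ideal (MvPolynomial σ k)}
    (hJ : zeroLocus k J ⊆ {0}) : ∃ M, ∀ i, (X i : MvPolynomial σ k) ^ M ∈ J := by
  have hX : ∀ i, (X i : MvPolynomial σ k) ∈ J.radical := fun i => by
    rw [← vanishingIdeal_zeroLocus_eq_radical (K := k), mem_vanishingIdeal_iff]
    intro x hx
    rw [Set.mem_singleton_iff.1 (hJ hx), aeval_X, Pi.zero_apply]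
  choose M hM using hX
  obtain ⟨B, hB⟩ := Finite.bddAbove_range M
  exact ⟨B, fun i => J.pow_mem_of_pow_mem (hM i) (hB ⟨i, rfl⟩)⟩

end Finiteness

end MvPolynomial

namespace Projectivization

open scoped LinearAlgebra.Projectivization

variable {k σ : Type*} [Field k] [IsAlgClosed k]

theorem finite_of_smul_rep_mem {h : MvPolynomial σ k} {e : ℕ} (he : 0 < e)
    (hh : h.IsHomogeneous e) {S : Set (ℙ k (σ → k))} {A : Set (σ → k)} (hA : A.Finite)
    (hS : ∀ p ∈ S, eval p.rep h ≠ 0)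
    (hSA : ∀ p ∈ S, ∀ c : k, eval (c • p.rep) h = 1 → c • p.rep ∈ A) : S.Finite := by
  choose c hc using fun p : ℙ k (σ → k) => IsAlgClosed.exists_pow_nat_eq (eval p.rep h)⁻¹ he
  have hnorm : ∀ p ∈ S, eval (c p • p.rep) h = 1 := fun p hp => by
    rw [hh.eval_smul, hc, inv_mul_cancel₀ (hS p hp)]
  refine Set.Finite.of_finite_image (f := fun p => c p • p.rep)
    (hA.subset (Set.image_subset_iff.2 fun p hp => hSA p hp _ (hnorm p hp))) ?_
  intro p hp q hq hpq
  have hcp : c p ≠ 0 := by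
    intro h0
    have := hnorm p hp
    rw [h0, hh.eval_smul, zero_pow he.ne', zero_mul] at this
    exact zero_ne_one this
  rw [← mk_rep p, ← mk_rep q, mk_eq_mk_iff']
  exact ⟨(c p)⁻¹ * c q, by rw [mul_smul, ← show c p • p.rep = c q • q.rep from hpq,
    inv_smul_smul₀ hcp]⟩

attribute [local instance] gradedAlgebra in
theorem finite_setOf_forall_eval_eq_zero [Finite σ] {ι : Type*}
    {P : ι → MvPolynomial σ k} {n : ι → ℕ} (hP : ∀ j, (P j).IsHomogeneous (n j))
    {h : MvPolynomial σ k} {e : ℕ} (he : 0 < e) (hh : h.IsHomogeneous e)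
    (hV : ∀ x ≠ 0, (∀ j, eval x (P j) = 0) → eval x h ≠ 0) :
    {p : ℙ k (σ → k) | ∀ j, eval p.rep (P j) = 0}.Finite := by
  set I := Ideal.span (Set.range P)
  have hI : I.IsHomogeneous (homogeneousSubmodule σ k) :=
    Ideal.homogeneous_span _ _ (by rintro _ ⟨j, rfl⟩; exact ⟨n j, hP j⟩)
  have hzero : zeroLocus k (I ⊔ Ideal.span {h}) ⊆ {0} := fun x hx => by
    by_contra hx0
    refine hV x hx0 (fun j => hx _ (Ideal.mem_sup_left (Ideal.subset_span ⟨j, rfl⟩)))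
      (hx _ (Ideal.mem_sup_right (Ideal.mem_span_singleton_self h)))
  obtain ⟨M, hM⟩ := exists_X_pow_mem_of_zeroLocus_subset_zero hzero
  have hrel : ∀ i, ∃ v : MvPolynomial σ k, v.IsHomogeneous M ∧ X i ^ (M + e) - v * h ∈ I :=
    fun i => exists_isHomogeneous_sub_mul_mem hI hh (isHomogeneous_X_pow i _)
      (Ideal.pow_mem_of_pow_mem _ (hM i) (Nat.le_add_right _ _))
  choose v hv hvI using hrel
  have := finite_quotient_span_X_pow_sub (m := M + e) v fun i =>
    (hv i).totalDegree_le.trans_lt (by omega)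
  refine finite_of_smul_rep_mem he hh
    (finite_zeroLocus_of_finite_quotient (Ideal.span (Set.range fun i => X i ^ (M + e) - v i)))
    (fun p hp => hV _ p.rep_nonzero hp) fun p hp c hc => ?_
  have hcone : c • p.rep ∈ zeroLocus k I := by
    rw [zeroLocus_span]
    rintro _ ⟨j, rfl⟩
    simp [(hP j).eval_smul, hp j]
  rw [zeroLocus_span]
  rintro _ ⟨i, rfl⟩
  simpa [hc] using hcone _ (hvI i)

end Projectivization

theorem isolated_singularities_of_smooth_extension_general
    (k : Type*) [Field k] [IsAlgClosed k]
    (N d : ℕ) (hd : 1 ≤ d)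
    (f : MvPolynomial (Fin N) k) (hf : f.IsHomogeneous d) (hf0 : f ≠ 0)
    (g : MvPolynomial (Fin (N + 1)) k) (hg : g.IsHomogeneous d)
    (hres : aeval (Fin.cases 0 X : Fin (N + 1) → MvPolynomial (Fin N) k) g = f)
    (hsmooth : ∀ x : Fin (N + 1) → k, x ≠ 0 →
      (∀ i, eval x (pderiv i g) = 0) → False) :
    Set.Finite {p : Projectivization k (Fin N → k) |
      eval p.rep f = 0 ∧ ∀ i, eval p.rep (pderiv i f) = 0} := by
  subst hres
  refine Set.Finite.subset ?_ fun p hp => hp.2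
  obtain rfl | hd := hd.eq_or_lt
  · exact Set.finite_empty.subset fun p hp =>
      hf0 (eq_zero_of_isHomogeneous_one_of_eval_pderiv_eq_zero hf hp)
  · exact Projectivization.finite_setOf_forall_eval_eq_zero (fun i => hf.pderiv)
      (by omega : 0 < d - 1) (IsHomogeneous.aeval_finCases_zero_X (hg.pderiv (i := 0)))
      fun x hx hsing => eval_aeval_finCases_zero_X_pderiv_zero_ne_zero hsmooth hx hsing

/-- Let `f` be a nonzero homogeneous polynomial of degree `d` in the variables
`x_1, …, x_N` over an algebraically closed field of characteristic zero, defining a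
hypersurface `Y = V(f) ⊆ ℙ^{N-1}`, where `ℙ^{N-1} ⊆ ℙ^N` is the hyperplane `{x_0 = 0}`.
If there is a smooth degree-`d` hypersurface `X = V(g) ⊆ ℙ^N` (smooth: the partial
derivatives of `g` have no common nonzero zero) with `Y = X ∩ ℙ^{N-1}` (i.e. `f` is the
restriction of `g` to `{x_0 = 0}`), then `Y` has only isolated singularities: the set of
singular points of `Y` in projective space is finite. -/
theorem isolated_singularities_of_smooth_extension
    (k : Type*) [Field k] [IsAlgClosed k] [CharZero k]
    (N d : ℕ) (hd : 1 ≤ d)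
    (f : MvPolynomial (Fin N) k) (hf : f.IsHomogeneous d) (hf0 : f ≠ 0)
    (g : MvPolynomial (Fin (N + 1)) k) (hg : g.IsHomogeneous d)
    (hres : aeval (Fin.cases 0 X : Fin (N + 1) → MvPolynomial (Fin N) k) g = f)
    (hsmooth : ∀ x : Fin (N + 1) → k, x ≠ 0 →
      (∀ i, eval x (pderiv i g) = 0) → False) :
    Set.Finite {p : Projectivization k (Fin N → k) |
      eval p.rep f = 0 ∧ ∀ i, eval p.rep (pderiv i f) = 0} :=
  isolated_singularities_of_smooth_extension_general k N d hd f hf hf0 g hg hres hsmooth
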